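/- The expectation of the clipped IPW estimator with accurate propensities deviates from P by at most (1/|D|) Σ_{(u,i): p_{u,i} < τ} e_{u,i} (τ − p_{u,i})/τ; in particular, if p_{u,i} ≥ τ for all (u,i), the clipped IPW estimator with accurate propensities is unbiased. -/

import Mathlib

open Finset

/-- Expectation over independent Bernoulli observation indicators. -/
noncomputable def expVal {D : Type*} [Fintype D] [DecidableEq D] (p : D → ℝ) (f : (D → Bool) → ℝ) : ℝ :=
  ∑ o : D → Bool, (∏ d, if o d then p d else 1 - p d) * f o

/-! Under the product weights the indicator `o d` has expectation `p d`, so by linearity the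
clipped estimator has expectation `(1/|D|) Σ p e / max p τ`. It agrees with `P` termwise where
`p ≥ τ` and falls short by `e (τ - p) / τ ≥ 0` where `p < τ`. -/

section expVal

variable {D : Type*} [Fintype D] [DecidableEq D] (p : D → ℝ)

theorem expVal_const_mul (c : ℝ) (f : (D → Bool) → ℝ) :
    expVal p (fun o => c * f o) = c * expVal p f := by
  simp only [expVal, mul_sum]
  exact sum_congr rfl fun o _ => by ring

theorem expVal_sum {ι : Type*} (s : Finset ι) (f : ι → (D → Bool) → ℝ) :
    expVal p (fun o => ∑ i ∈ s, f i o) = ∑ i ∈ s, expVal p (f i) := by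
  simp only [expVal, mul_sum]
  exact sum_comm

theorem expVal_indicator (d₀ : D) :
    expVal p (fun o => if o d₀ then 1 else 0) = p d₀ := by
  -- Fold the indicator into the `d₀`-factor, then factor the sum over `o` coordinatewise.
  have hfold : ∀ o : D → Bool, (∏ d, if o d then p d else 1 - p d) * (if o d₀ then 1 else 0)
      = ∏ d, (if o d then p d else 1 - p d) * (if d = d₀ then (if o d then 1 else 0) else 1) := by
    intro o
    rw [prod_mul_distrib, prod_ite_eq' univ d₀ fun d => if o d then (1 : ℝ) else 0]
    simp
  simp only [expVal, hfold]
  rw [← Fintype.prod_sum fun d (b : Bool) =>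
    (if b then p d else 1 - p d) * (if d = d₀ then (if b then (1 : ℝ) else 0) else 1)]
  rw [prod_eq_single d₀ (fun d _ hd => by simp [hd]) (by simp)]
  simp

theorem expVal_indicator_mul (d₀ : D) (a : ℝ) :
    expVal p (fun o => (if o d₀ then 1 else 0) * a) = p d₀ * a := by
  simp_rw [mul_comm _ a]
  rw [expVal_const_mul, expVal_indicator]

end expVal

theorem sub_mul_div_max_eq_ite {e p τ : ℝ} (hτ : 0 < τ) :
    e - p * e / max p τ = if p < τ then e * (τ - p) / τ else 0 := by
  split_ifs with h
  · rw [max_eq_right h.le]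
    field_simp
  · rw [max_eq_left (not_lt.mp h)]
    field_simp [(hτ.trans_le (not_lt.mp h)).ne']
    ring

theorem sub_expVal_clipped_ipw {D : Type*} [Fintype D] [DecidableEq D] (e p : D → ℝ) {τ : ℝ}
    (hτ : 0 < τ) (c : ℝ) :
    c * ∑ d, e d - expVal p (fun o => c * ∑ d, (if o d then (1 : ℝ) else 0) * e d / max (p d) τ)
      = c * ∑ d ∈ univ.filter (fun d => p d < τ), e d * (τ - p d) / τ := by
  simp_rw [mul_div_assoc]
  rw [expVal_const_mul, expVal_sum]
  simp_rw [expVal_indicator_mul, ← mul_div_assoc]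
  rw [← mul_sub, ← sum_sub_distrib, sum_filter]
  simp_rw [sub_mul_div_max_eq_ite hτ]

open Classical in
theorem clipped_ipw_bias_bound_general {D : Type*} [Fintype D] [DecidableEq D]
    (e p : D → ℝ) (he : ∀ d, 0 ≤ e d)
    (τ : ℝ) (hτ : 0 < τ ∧ τ ≤ 1) :
    |expVal p (fun o => (Fintype.card D : ℝ)⁻¹ *
        ∑ d, (if o d then (1 : ℝ) else 0) * e d / max (p d) τ)
      - (Fintype.card D : ℝ)⁻¹ * ∑ d, e d|
      ≤ (Fintype.card D : ℝ)⁻¹ *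
          ∑ d ∈ univ.filter (fun d => p d < τ), e d * (τ - p d) / τ ∧
    ((∀ d, τ ≤ p d) →
      expVal p (fun o => (Fintype.card D : ℝ)⁻¹ *
          ∑ d, (if o d then (1 : ℝ) else 0) * e d / max (p d) τ)
        = (Fintype.card D : ℝ)⁻¹ * ∑ d, e d) := by
  have hbias := sub_expVal_clipped_ipw e p hτ.1 (Fintype.card D : ℝ)⁻¹
  have hbias_nonneg : 0 ≤ (Fintype.card D : ℝ)⁻¹ *
      ∑ d ∈ univ.filter (fun d => p d < τ), e d * (τ - p d) / τ := by
    refine mul_nonneg (by positivity) (sum_nonneg fun d hd => ?_)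
    have hpd : p d < τ := (mem_filter.mp hd).2
    exact div_nonneg (mul_nonneg (he d) (by linarith)) hτ.1.le
  refine ⟨by rw [abs_sub_comm, hbias, abs_of_nonneg hbias_nonneg], fun hτp => ?_⟩
  have hempty : univ.filter (fun d => p d < τ) = ∅ :=
    filter_eq_empty_iff.mpr fun d _ => not_lt.mpr (hτp d)
  rw [hempty, sum_empty, mul_zero, sub_eq_zero] at hbias
  exact hbias.symm

open Classical in
/-- The expectation of the clipped IPW estimator with accurate propensities deviates from `P`
by at most `(1/|D|) Σ_{p < τ} e (τ - p)/τ`; if no propensity is below `τ`, it is unbiased. -/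
theorem clipped_ipw_bias_bound {D : Type*} [Fintype D] [DecidableEq D] [Nonempty D]
    (e p : D → ℝ) (he : ∀ d, 0 ≤ e d) (hp : ∀ d, 0 < p d ∧ p d ≤ 1)
    (τ : ℝ) (hτ : 0 < τ ∧ τ ≤ 1) :
    |expVal p (fun o => (Fintype.card D : ℝ)⁻¹ *
        ∑ d, (if o d then (1 : ℝ) else 0) * e d / max (p d) τ)
      - (Fintype.card D : ℝ)⁻¹ * ∑ d, e d|
      ≤ (Fintype.card D : ℝ)⁻¹ *
          ∑ d ∈ univ.filter (fun d => p d < τ), e d * (τ - p d) / τ ∧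
    ((∀ d, τ ≤ p d) →
      expVal p (fun o => (Fintype.card D : ℝ)⁻¹ *
          ∑ d, (if o d then (1 : ℝ) else 0) * e d / max (p d) τ)
        = (Fintype.card D : ℝ)⁻¹ * ∑ d, e d) :=
  clipped_ipw_bias_bound_general e p he τ hτ
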